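/- Let M and D be real symmetric positive definite n×n matrices, 0 < α < β reals with M ⪯ β·D, k ∈ ℕ, s̄ = (β+α)/(β−α), c₁ = (1 + 1/C_{k+1}(s̄))⁻¹ and c₂ = (1 − 1/C_{k+1}(s̄))⁻¹. Let P = (I − T̃_{k+1}(D⁻¹M)) M⁻¹ be the degree-k Chebyshev–Jacobi preconditioner. Then P is invertible, and the matrix Â = (c₁·P)⁻¹ satisfies Â ⪯ (c₂/c₁)·β·D in the Loewner order. (This is the estimate Â ≤ (c₂/c₁)·λ_max(D_A⁻¹A)·D_A derived from Lemma 1 in the proof of the smoothing property.) -/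

import Mathlib

open Polynomial Matrix

/-- The polynomial `t ↦ C_{k+1}((β+α-2t)/(β-α)) / C_{k+1}((β+α)/(β-α))`, where `C` is the
Chebyshev polynomial of the first kind. -/
noncomputable def Ttilde (α β : ℝ) (k : ℕ) : Polynomial ℝ :=
  Polynomial.C ((Polynomial.Chebyshev.T ℝ (k + 1)).eval ((β + α) / (β - α)))⁻¹ *
    ((Polynomial.Chebyshev.T ℝ (k + 1)).comp
      (Polynomial.C ((β + α) / (β - α)) - Polynomial.C (2 / (β - α)) * Polynomial.X))

/-- The degree-`k` Chebyshev–Jacobi preconditioner `P = (I - T̃_{k+1}(D⁻¹M)) M⁻¹`. -/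
noncomputable def chebJacobiPrecond {n : Type*} [Fintype n] [DecidableEq n]
    (M D : Matrix n n ℝ) (α β : ℝ) (k : ℕ) : Matrix n n ℝ :=
  (1 - Polynomial.aeval (D⁻¹ * M) (Ttilde α β k)) * M⁻¹



section ScalarHelpers
open Real


section helpers

private lemma T_real_cosh (x : ℝ) (m : ℤ) :
    (Polynomial.Chebyshev.T ℝ m).eval (Real.cosh x) = Real.cosh (m * x) := by
  have h := Polynomial.Chebyshev.T_complex_cos (x * Complex.I) m
  rw [Complex.cos_mul_I] at h
  apply Complex.ofReal_injective
  rw [Polynomial.Chebyshev.complex_ofReal_eval_T, Complex.ofReal_cosh, h, Complex.ofReal_cosh,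
    ← Complex.cos_mul_I]
  push_cast
  ring_nf

private noncomputable def acosh (u : ℝ) : ℝ := Real.log (u + Real.sqrt (u ^ 2 - 1))

private lemma cosh_acosh {u : ℝ} (hu : 1 ≤ u) : Real.cosh (acosh u) = u := by
  have hs : Real.sqrt (u ^ 2 - 1) ^ 2 = u ^ 2 - 1 := Real.sq_sqrt (by nlinarith)
  have hsn : 0 ≤ Real.sqrt (u ^ 2 - 1) := Real.sqrt_nonneg _
  have ha0 : 0 < u + Real.sqrt (u ^ 2 - 1) := by linarith
  have hinv : (u + Real.sqrt (u ^ 2 - 1))⁻¹ = u - Real.sqrt (u ^ 2 - 1) := by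
    apply inv_eq_of_mul_eq_one_right; nlinarith
  rw [acosh, Real.cosh_eq, Real.exp_log ha0, ← Real.log_inv, Real.exp_log (by positivity), hinv]
  ring

private lemma acosh_nonneg {u : ℝ} (hu : 1 ≤ u) : 0 ≤ acosh u :=
  Real.log_nonneg (by have := Real.sqrt_nonneg (u ^ 2 - 1); linarith)

private lemma acosh_pos {u : ℝ} (hu : 1 < u) : 0 < acosh u := by
  apply Real.log_pos
  have := Real.sqrt_nonneg (u ^ 2 - 1); linarith

private lemma acosh_mono {u v : ℝ} (hu : 1 ≤ u) (huv : u ≤ v) : acosh u ≤ acosh v := by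
  apply Real.log_le_log (by have := Real.sqrt_nonneg (u ^ 2 - 1); linarith)
  have : Real.sqrt (u ^ 2 - 1) ≤ Real.sqrt (v ^ 2 - 1) := Real.sqrt_le_sqrt (by nlinarith)
  linarith

private lemma sinh_ratio (m : ℕ) {a b : ℝ} (ha : 0 ≤ a) (hab : a ≤ b) :
    Real.sinh (m * a) * Real.sinh b ≤ Real.sinh (m * b) * Real.sinh a := by
  induction m with
  | zero => simp
  | succ m ih =>
    have hb : 0 ≤ b := ha.trans hab
    have h1 : Real.cosh a ≤ Real.cosh b := by
      rw [Real.cosh_le_cosh, abs_of_nonneg ha, abs_of_nonneg hb]; exact hab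
    have h2 : Real.cosh (m * a) ≤ Real.cosh (m * b) := by
      rw [Real.cosh_le_cosh, abs_of_nonneg (by positivity), abs_of_nonneg (by positivity)]
      exact mul_le_mul_of_nonneg_left hab (by positivity)
    have hsa : 0 ≤ Real.sinh a := Real.sinh_nonneg_iff.mpr ha
    have hsb : 0 ≤ Real.sinh b := Real.sinh_nonneg_iff.mpr hb
    have hsma : 0 ≤ Real.sinh (m * a) := Real.sinh_nonneg_iff.mpr (by positivity)
    have hsmb : 0 ≤ Real.sinh (m * b) := Real.sinh_nonneg_iff.mpr (by positivity)
    have hca : 1 ≤ Real.cosh a := Real.one_le_cosh a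
    have hcma : 1 ≤ Real.cosh (m * a) := Real.one_le_cosh _
    have e1 : ((m : ℝ) + 1) * a = m * a + a := by ring
    have e2 : ((m : ℝ) + 1) * b = m * b + b := by ring
    push_cast
    rw [e1, e2, Real.sinh_add, Real.sinh_add]
    nlinarith [mul_le_mul_of_nonneg_right ih (Real.cosh_pos a).le, mul_le_mul_of_nonneg_left h1 (mul_nonneg hsmb hsa),
      mul_le_mul_of_nonneg_right h2 (mul_nonneg hsa hsb)]

private lemma cosh_sub_one (t : ℝ) : Real.cosh t - 1 = 2 * Real.sinh (t / 2) ^ 2 := by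
  have : t = 2 * (t / 2) := by ring
  rw [this, Real.cosh_two_mul, Real.cosh_sq]; ring

private lemma chord (m : ℕ) {x y : ℝ} (hx : 0 ≤ x) (hxy : x ≤ y) :
    (Real.cosh (m * x) - 1) * (Real.cosh y - 1) ≤ (Real.cosh (m * y) - 1) * (Real.cosh x - 1) := by
  have h := sinh_ratio m (a := x / 2) (b := y / 2) (by linarith) (by linarith)
  have hsa : 0 ≤ Real.sinh (x / 2) := Real.sinh_nonneg_iff.mpr (by linarith)
  have hsb : 0 ≤ Real.sinh (y / 2) := Real.sinh_nonneg_iff.mpr (by linarith)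
  have hx2 : (0:ℝ) ≤ x / 2 := by linarith
  have hsma : 0 ≤ Real.sinh (m * (x / 2)) := Real.sinh_nonneg_iff.mpr (by positivity)
  have hy2 : (0:ℝ) ≤ y / 2 := by linarith
  have hsmb : 0 ≤ Real.sinh (m * (y / 2)) := Real.sinh_nonneg_iff.mpr (by positivity)
  have e1 : m * x / 2 = m * (x / 2) := by ring
  have e2 : m * y / 2 = m * (y / 2) := by ring
  rw [cosh_sub_one, cosh_sub_one, cosh_sub_one, cosh_sub_one, e1, e2]
  nlinarith [mul_le_mul h h (by positivity) (mul_nonneg hsmb hsa)]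

private lemma Ck_gt_one {α β : ℝ} (hα : 0 < α) (hαβ : α < β) (k : ℕ) :
    1 < (Polynomial.Chebyshev.T ℝ ((k : ℤ) + 1)).eval ((β + α) / (β - α)) := by
  have hδ : 0 < β - α := by linarith
  have hs : 1 < (β + α) / (β - α) := (one_lt_div hδ).mpr (by linarith)
  have hy : 0 < acosh ((β + α) / (β - α)) := acosh_pos hs
  rw [← cosh_acosh hs.le, T_real_cosh, Real.one_lt_cosh]
  have hk : (0:ℝ) < ((k : ℤ) + 1 : ℤ) := by exact_mod_cast Nat.succ_pos k
  positivity

private lemma key_mul {α β : ℝ} (hα : 0 < α) (hαβ : α < β) (k : ℕ) {t : ℝ}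
    (ht0 : 0 ≤ t) (htβ : t ≤ β) :
    ((Polynomial.Chebyshev.T ℝ ((k : ℤ) + 1)).eval ((β + α) / (β - α)) - 1) * t
      ≤ β * ((Polynomial.Chebyshev.T ℝ ((k : ℤ) + 1)).eval ((β + α) / (β - α))
          - (Polynomial.Chebyshev.T ℝ ((k : ℤ) + 1)).eval
              ((β + α) / (β - α) - 2 / (β - α) * t)) := by
  have hδ : 0 < β - α := by linarith
  have hβ : 0 < β := by linarith
  have hs : 1 < (β + α) / (β - α) := (one_lt_div hδ).mpr (by linarith)
  have hCk := Ck_gt_one hα hαβ k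
  set s : ℝ := (β + α) / (β - α) with hsdef
  set u : ℝ := s - 2 / (β - α) * t with hudef
  set Ck : ℝ := (Polynomial.Chebyshev.T ℝ ((k : ℤ) + 1)).eval s with hCkdef
  have hu_eq : u = (β + α - 2 * t) / (β - α) := by rw [hudef, hsdef]; ring
  have hum1 : -1 ≤ u := by
    rw [hu_eq, le_div_iff₀ hδ]; linarith
  by_cases htα : α ≤ t
  · -- u ∈ [-1, 1]
    have hu1 : u ≤ 1 := by rw [hu_eq, div_le_one hδ]; linarith
    have hTu : (Polynomial.Chebyshev.T ℝ ((k : ℤ) + 1)).eval u ≤ 1 := by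
      rw [← Real.cos_arccos hum1 hu1, Polynomial.Chebyshev.T_real_cos]
      exact Real.cos_le_one _
    nlinarith
  · -- u ∈ (1, s]
    push_neg at htα
    have hu1 : 1 ≤ u := by
      rw [hu_eq, le_div_iff₀ hδ]; linarith
    have hus : u ≤ s := by
      rw [hudef]; nlinarith [div_pos (by norm_num : (0:ℝ) < 2) hδ]
    set x := acosh u with hxdef
    set y := acosh s with hydef
    have hx0 : 0 ≤ x := acosh_nonneg hu1
    have hxy : x ≤ y := acosh_mono hu1 hus
    have hy0 : 0 ≤ y := hx0.trans hxy
    have hk1 : (0:ℝ) ≤ (k:ℝ) + 1 := by positivity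
    have hcast : (((k : ℤ) + 1 : ℤ) : ℝ) = (k : ℝ) + 1 := by push_cast; ring
    have hTu : (Polynomial.Chebyshev.T ℝ ((k : ℤ) + 1)).eval u = Real.cosh (((k:ℝ) + 1) * x) := by
      rw [← cosh_acosh hu1, T_real_cosh, hcast]
    have hTs : Ck = Real.cosh (((k:ℝ) + 1) * y) := by
      rw [hCkdef, ← cosh_acosh hs.le, T_real_cosh, hcast]
    have hch := chord (k + 1) hx0 hxy
    have hcx : Real.cosh x = u := cosh_acosh hu1
    have hcy : Real.cosh y = s := cosh_acosh hs.le
    push_cast at hch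
    rw [hcx, hcy, ← hTu, ← hTs] at hch
    -- hch : (Tu - 1) * (s - 1) ≤ (Ck - 1) * (u - 1)
    have hTuCk : (Polynomial.Chebyshev.T ℝ ((k : ℤ) + 1)).eval u ≤ Ck := by
      rw [hTu, hTs, Real.cosh_le_cosh, abs_of_nonneg (mul_nonneg hk1 hx0),
        abs_of_nonneg (mul_nonneg hk1 hy0)]
      exact mul_le_mul_of_nonneg_left hxy hk1
    -- translate s - 1 and u - 1
    have e1 : (s - 1) * (β - α) = 2 * α := by rw [hsdef]; field_simp; ring
    have e2 : (u - 1) * (β - α) = 2 * (α - t) := by rw [hu_eq]; field_simp; ring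
    set Tu := (Polynomial.Chebyshev.T ℝ ((k : ℤ) + 1)).eval u
    have h4 : (Tu - 1) * (2 * α) ≤ (Ck - 1) * (2 * (α - t)) := by
      have := mul_le_mul_of_nonneg_right hch hδ.le
      calc (Tu - 1) * (2 * α) = (Tu - 1) * ((s - 1) * (β - α)) := by rw [e1]
        _ = (Tu - 1) * (s - 1) * (β - α) := by ring
        _ ≤ (Ck - 1) * (u - 1) * (β - α) := this
        _ = (Ck - 1) * ((u - 1) * (β - α)) := by ring
        _ = (Ck - 1) * (2 * (α - t)) := by rw [e2]
    nlinarith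

private lemma final_scalar {Ck Tu μ β c₁ c₂ : ℝ} (hCk : 1 < Ck) (hμ : 0 < μ) (hμβ : μ ≤ β)
    (hmul : (Ck - 1) * μ ≤ β * (Ck - Tu))
    (hc₁ : c₁ = (1 + 1 / Ck)⁻¹) (hc₂ : c₂ = (1 - 1 / Ck)⁻¹) :
    0 < (1 - Ck⁻¹ * Tu) * μ⁻¹ ∧
      0 ≤ c₂ / c₁ * β - (c₁ * ((1 - Ck⁻¹ * Tu) * μ⁻¹))⁻¹ := by
  have hβ : 0 < β := hμ.trans_le hμβ
  have hCk0 : 0 < Ck := by linarith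
  have hTu : Tu < Ck := by nlinarith
  have h1 : 0 < 1 - Ck⁻¹ * Tu := by
    have h := mul_lt_mul_of_pos_left hTu (inv_pos.mpr hCk0)
    rw [inv_mul_cancel₀ hCk0.ne'] at h; linarith
  refine ⟨mul_pos h1 (inv_pos.mpr hμ), ?_⟩
  subst hc₁ hc₂
  have hne1 : Ck ≠ 0 := hCk0.ne'
  have hne2 : Ck - 1 ≠ 0 := by intro h; rw [sub_eq_zero] at h; exact absurd h.symm hCk.ne
  have hne3 : Ck - Tu ≠ 0 := (sub_pos.mpr hTu).ne'
  have hne4 : μ ≠ 0 := hμ.ne'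
  have hne5 : (1:ℝ) - Ck⁻¹ * Tu ≠ 0 := h1.ne'
  have hne6 : 1 - 1 / Ck ≠ 0 := by
    have : 1 / Ck < 1 := by rw [div_lt_one hCk0]; exact hCk
    intro h; rw [sub_eq_zero] at h; rw [← h] at this; exact lt_irrefl _ this
  have hne7 : 1 + 1 / Ck ≠ 0 := by positivity
  have e : (1 - 1/Ck)⁻¹ / (1 + 1/Ck)⁻¹ * β - ((1 + 1/Ck)⁻¹ * ((1 - Ck⁻¹ * Tu) * μ⁻¹))⁻¹
      = ((Ck + 1) * (β * (Ck - Tu) - (Ck - 1) * μ)) / ((Ck - 1) * (Ck - Tu)) := by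
    field_simp
  rw [e]
  apply div_nonneg
  · nlinarith
  · nlinarith

end helpers

end ScalarHelpers

section MatrixHelpers
variable {n : Type*} [Fintype n] [DecidableEq n]

private lemma sandwich (A B C A' B' C' : Matrix n n ℝ) (h : C * A' = 1) :
    (A * B * C) * (A' * B' * C') = A * (B * B') * C' := by
  calc (A * B * C) * (A' * B' * C')
      = A * (B * (C * (A' * (B' * C')))) := by simp only [Matrix.mul_assoc]
    _ = A * (B * (B' * C')) := by rw [← Matrix.mul_assoc C A' (B' * C'), h, Matrix.one_mul]
    _ = A * (B * B') * C' := by simp only [Matrix.mul_assoc]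



variable {n : Type*} [Fintype n] [DecidableEq n]

private lemma mconj_pow (U V A : Matrix n n ℝ) (hUV : U * V = 1) (hVU : V * U = 1) (m : ℕ) :
    (U * A * V) ^ m = U * A ^ m * V := by
  induction m with
  | zero => simp [hUV]
  | succ m ih =>
    rw [pow_succ, pow_succ, ih]
    calc U * A ^ m * V * (U * A * V) = U * A ^ m * (V * U) * (A * V) := by
          simp only [Matrix.mul_assoc]
      _ = U * (A ^ m * A) * V := by rw [hVU]; simp only [Matrix.mul_one, Matrix.mul_assoc]

private lemma aeval_conj (U V A : Matrix n n ℝ) (hUV : U * V = 1) (hVU : V * U = 1)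
    (p : Polynomial ℝ) : aeval (U * A * V) p = U * aeval A p * V := by
  induction p using Polynomial.induction_on' with
  | add p q hp hq => rw [map_add, map_add, hp, hq, Matrix.mul_add, Matrix.add_mul]
  | monomial m a =>
    rw [aeval_monomial, aeval_monomial, mconj_pow U V A hUV hVU m,
      Algebra.algebraMap_eq_smul_one]
    rw [smul_mul_assoc, one_mul, smul_mul_assoc, mul_smul_comm, smul_mul_assoc, one_mul]

private lemma aeval_diag (d : n → ℝ) (p : Polynomial ℝ) :
    aeval (Matrix.diagonal d) p = Matrix.diagonal (fun i => p.eval (d i)) := by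
  induction p using Polynomial.induction_on' with
  | add p q hp hq => rw [map_add, hp, hq, Matrix.diagonal_add]; simp [eval_add]
  | monomial m a =>
    rw [aeval_monomial, Algebra.algebraMap_eq_smul_one, smul_mul_assoc, one_mul,
      Matrix.diagonal_pow]
    ext i j
    by_cases h : i = j <;>
      simp [Matrix.diagonal_apply, h, eval_monomial, Matrix.smul_apply]

end MatrixHelpers


open scoped MatrixOrder

theorem stmt17 {n : Type*} [Fintype n] [DecidableEq n]
    (M D : Matrix n n ℝ) (hM : M.PosDef) (hD : D.PosDef)
    (α β : ℝ) (hα : 0 < α) (hαβ : α < β)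
    (hspec : (β • D - M).PosSemidef) (k : ℕ)
    (c₁ c₂ : ℝ)
    (hc₁ : c₁ = (1 + 1 / (Polynomial.Chebyshev.T ℝ (k + 1)).eval ((β + α) / (β - α)))⁻¹)
    (hc₂ : c₂ = (1 - 1 / (Polynomial.Chebyshev.T ℝ (k + 1)).eval ((β + α) / (β - α)))⁻¹) :
    IsUnit (chebJacobiPrecond M D α β k) ∧
      ((c₂ / c₁ * β) • D - (c₁ • chebJacobiPrecond M D α β k)⁻¹).PosSemidef := by
  classical
  have hβ : 0 < β := hα.trans hαβ
  -- square root of D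
  have hDps : D.PosSemidef := hD.posSemidef
  set S : Matrix n n ℝ := CFC.sqrt D with hSdef
  have hS : S.PosSemidef := Matrix.nonneg_iff_posSemidef.mp (CFC.sqrt_nonneg D)
  have hSS : S * S = D := CFC.sqrt_mul_sqrt_self D (Matrix.nonneg_iff_posSemidef.mpr hDps)
  have hSdet : IsUnit S.det := by
    refine isUnit_iff_ne_zero.mpr fun h0 => ?_
    have h2 : S.det * S.det = D.det := by rw [← Matrix.det_mul, hSS]
    rw [h0, mul_zero] at h2
    exact hD.det_pos.ne' h2.symm
  have hS1 : S⁻¹ * S = 1 := Matrix.nonsing_inv_mul S hSdet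
  have hS2 : S * S⁻¹ = 1 := Matrix.mul_nonsing_inv S hSdet
  have hSH : Sᴴ = S := hS.1
  have hSiH : S⁻¹ᴴ = S⁻¹ := hS.1.inv
  -- the symmetrized matrix X
  set X : Matrix n n ℝ := S⁻¹ * M * S⁻¹ with hXdef
  have hXps : X.PosSemidef := by
    have h := hM.posSemidef.mul_mul_conjTranspose_same S⁻¹
    rwa [hSiH] at h
  have hXH : X.IsHermitian := hXps.1
  set U : Matrix n n ℝ := (hXH.eigenvectorUnitary : Matrix n n ℝ) with hUdef
  set μ : n → ℝ := hXH.eigenvalues with hμdef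
  have hU1 : U * star U = 1 := Matrix.mem_unitaryGroup_iff.mp hXH.eigenvectorUnitary.2
  have hU2 : star U * U = 1 := Matrix.mem_unitaryGroup_iff'.mp hXH.eigenvectorUnitary.2
  set E : (n → ℝ) → Matrix n n ℝ := fun d => U * Matrix.diagonal d * star U with hEdef
  have hXE : X = E μ := by
    have h := hXH.spectral_theorem
    rw [hEdef]
    simpa using h
  -- eigenvalues are positive
  have hμ0 : ∀ i, 0 < μ i := by
    intro i
    rcases (hXps.eigenvalues_nonneg i).lt_or_eq with h | h
    · exact h
    · exfalso
      have hXu : IsUnit X := by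
        have hSiu : IsUnit S⁻¹ := (Matrix.isUnit_iff_isUnit_det _).mpr (Matrix.isUnit_det_of_right_inverse hS1)
        exact (hSiu.mul hM.isUnit).mul hSiu
      have hdet : X.det ≠ 0 := ((Matrix.isUnit_iff_isUnit_det X).mp hXu).ne_zero
      apply hdet
      rw [hXH.det_eq_prod_eigenvalues]
      refine Finset.prod_eq_zero (Finset.mem_univ i) ?_
      simp [← h]
  -- eigenvalues are at most β
  have hβX : (β • (1 : Matrix n n ℝ) - X).PosSemidef := by
    have h := hspec.mul_mul_conjTranspose_same S⁻¹
    rw [hSiH] at h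
    have e1 : S⁻¹ * (S * S) * S⁻¹ = 1 := by
      rw [← Matrix.mul_assoc, hS1, Matrix.one_mul, hS2]
    have e : S⁻¹ * (β • D - M) * S⁻¹ = β • (1 : Matrix n n ℝ) - X := by
      rw [Matrix.mul_sub, Matrix.sub_mul, Matrix.mul_smul, Matrix.smul_mul, ← hSS, e1, hXdef]
    rwa [e] at h
  have hμβ : ∀ i, μ i ≤ β := by
    intro i
    have h := hβX.conjTranspose_mul_mul_same U
    rw [← Matrix.star_eq_conjTranspose] at h
    have e : (star U) * (β • (1 : Matrix n n ℝ) - X) * U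
        = Matrix.diagonal (fun j => β - μ j) := by
      rw [Matrix.mul_sub, Matrix.sub_mul, hXE, hEdef]
      simp only
      rw [Matrix.mul_smul, Matrix.smul_mul, Matrix.mul_one, hU2]
      have e2 : star U * (U * Matrix.diagonal μ * star U) * U = Matrix.diagonal μ := by
        rw [← Matrix.mul_assoc, ← Matrix.mul_assoc, hU2, Matrix.one_mul,
          Matrix.mul_assoc, hU2, Matrix.mul_one]
      rw [e2]
      ext i j
      by_cases hij : i = j <;>
        simp [Matrix.sub_apply, Matrix.smul_apply, Matrix.one_apply, Matrix.diagonal_apply, hij]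
    rw [e] at h
    have := Matrix.posSemidef_diagonal_iff.mp h i
    linarith
  -- scalar facts
  have hCk : 1 < (Polynomial.Chebyshev.T ℝ ((k : ℤ) + 1)).eval ((β + α) / (β - α)) :=
    Ck_gt_one hα hαβ k
  have hCk0 : (0:ℝ) < (Polynomial.Chebyshev.T ℝ ((k : ℤ) + 1)).eval ((β + α) / (β - α)) := by
    linarith
  have hc₁0 : 0 < c₁ := by
    rw [hc₁]
    have h0 : (0:ℝ) < 1 + 1 / (Polynomial.Chebyshev.T ℝ ((k : ℤ) + 1)).eval ((β + α) / (β - α)) := by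
      positivity
    exact inv_pos.mpr h0
  have hTt : ∀ t : ℝ, (Ttilde α β k).eval t
      = ((Polynomial.Chebyshev.T ℝ ((k : ℤ) + 1)).eval ((β + α) / (β - α)))⁻¹
        * (Polynomial.Chebyshev.T ℝ ((k : ℤ) + 1)).eval
            ((β + α) / (β - α) - 2 / (β - α) * t) := by
    intro t
    simp [Ttilde, eval_comp]
  set g : n → ℝ := fun i => (1 - (Ttilde α β k).eval (μ i)) * (μ i)⁻¹ with hgdef
  have hscal : ∀ i, 0 < g i ∧ 0 ≤ c₂ / c₁ * β - (c₁ * g i)⁻¹ := by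
    intro i
    have hk := key_mul hα hαβ k (hμ0 i).le (hμβ i)
    have h := final_scalar hCk (hμ0 i) (hμβ i) hk hc₁ hc₂
    have hg_eq : g i = (1 - ((Polynomial.Chebyshev.T ℝ ((k : ℤ) + 1)).eval ((β + α) / (β - α)))⁻¹
        * (Polynomial.Chebyshev.T ℝ ((k : ℤ) + 1)).eval
            ((β + α) / (β - α) - 2 / (β - α) * (μ i))) * (μ i)⁻¹ := by
      show (1 - (Ttilde α β k).eval (μ i)) * (μ i)⁻¹ = _
      rw [hTt]
    rw [hg_eq]
    exact h
  -- matrix algebra with E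
  have hEmul : ∀ d e : n → ℝ, E d * E e = E (d * e) := by
    intro d e
    show U * Matrix.diagonal d * star U * (U * Matrix.diagonal e * star U) = _
    rw [sandwich _ _ _ _ _ _ hU2, Matrix.diagonal_mul_diagonal]
    rfl
  have hEone : E (fun _ => 1) = 1 := by
    show U * Matrix.diagonal (fun _ => (1:ℝ)) * star U = 1
    have hd1 : Matrix.diagonal (fun _ : n => (1:ℝ)) = 1 := Matrix.diagonal_one
    rw [hd1, Matrix.mul_one, hU1]
  have hEsmul : ∀ c : ℝ, E (fun _ => c) = c • (1 : Matrix n n ℝ) := by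
    intro c
    show U * Matrix.diagonal (fun _ => c) * star U = _
    have hd : Matrix.diagonal (fun _ : n => c) = c • (1 : Matrix n n ℝ) := by
      ext i j
      by_cases hij : i = j <;> simp [Matrix.diagonal_apply, hij, Matrix.one_apply]
    rw [hd, Matrix.mul_smul, Matrix.smul_mul, Matrix.mul_one, hU1]
  have hEsub : ∀ d e : n → ℝ, E d - E e = E (d - e) := by
    intro d e
    show U * Matrix.diagonal d * star U - U * Matrix.diagonal e * star U = _
    rw [← Matrix.sub_mul, ← Matrix.mul_sub, Matrix.diagonal_sub]
    rfl
  have haevalX : ∀ p : Polynomial ℝ, aeval X p = E (fun i => p.eval (μ i)) := by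
    intro p
    rw [hXE]
    show aeval (U * Matrix.diagonal μ * star U) p = _
    rw [aeval_conj U (star U) _ hU1 hU2, aeval_diag]
  have hDM : D⁻¹ * M = S⁻¹ * X * S := by
    rw [← hSS, Matrix.mul_inv_rev, hXdef]
    simp only [Matrix.mul_assoc, hS1, Matrix.mul_one]
  have hMeq : S * X * S = M := by
    rw [hXdef]
    simp only [Matrix.mul_assoc, hS1, Matrix.mul_one]
    rw [← Matrix.mul_assoc, hS2, Matrix.one_mul]
  have hMinv : M⁻¹ = S⁻¹ * E (fun i => (μ i)⁻¹) * S⁻¹ := by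
    apply Matrix.inv_eq_right_inv
    rw [← hMeq, hXE, sandwich _ _ _ _ _ _ hS2, hEmul]
    have e : (μ * fun i => (μ i)⁻¹) = fun _ : n => (1:ℝ) := by
      funext i
      exact mul_inv_cancel₀ (hμ0 i).ne'
    rw [e, hEone, Matrix.mul_one, hS2]
  have haevalDM : aeval (D⁻¹ * M) (Ttilde α β k)
      = S⁻¹ * E (fun i => (Ttilde α β k).eval (μ i)) * S := by
    rw [hDM, aeval_conj S⁻¹ S X hS1 hS2, haevalX]
  have hP : chebJacobiPrecond M D α β k = S⁻¹ * E g * S⁻¹ := by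
    rw [chebJacobiPrecond, haevalDM, hMinv]
    have h1 : (1 : Matrix n n ℝ) = S⁻¹ * E (fun _ => 1) * S := by
      rw [hEone, Matrix.mul_one, hS1]
    nth_rewrite 1 [h1]
    rw [← Matrix.sub_mul, ← Matrix.mul_sub, hEsub, sandwich _ _ _ _ _ _ hS2, hEmul]
    congr 1
  refine ⟨?_, ?_⟩
  · rw [hP]
    refine (Matrix.isUnit_iff_isUnit_det _).mpr (Matrix.isUnit_det_of_right_inverse (B := S * E (fun i => (g i)⁻¹) * S) ?_)
    rw [sandwich _ _ _ _ _ _ hS1, hEmul]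
    have e : (g * fun i => (g i)⁻¹) = fun _ : n => (1:ℝ) := by
      funext i
      exact mul_inv_cancel₀ (hscal i).1.ne'
    rw [e, hEone, Matrix.mul_one, hS1]
  · have hinv : (c₁ • chebJacobiPrecond M D α β k)⁻¹
        = S * E (fun i => (c₁ * g i)⁻¹) * S := by
      apply Matrix.inv_eq_right_inv
      rw [hP, Matrix.smul_mul, sandwich _ _ _ _ _ _ hS1, hEmul]
      have e : (g * fun i => (c₁ * g i)⁻¹) = fun _ : n => c₁⁻¹ := by
        funext i
        have hgi : g i ≠ 0 := (hscal i).1.ne'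
        rw [Pi.mul_apply, mul_inv, mul_comm c₁⁻¹, ← mul_assoc, mul_inv_cancel₀ hgi, one_mul]
      rw [e, hEsmul, Matrix.mul_smul, Matrix.smul_mul, Matrix.mul_one, hS1, smul_smul,
        mul_inv_cancel₀ hc₁0.ne', one_smul]
    rw [hinv]
    have hUH : (S * U)ᴴ = star U * S := by
      rw [Matrix.conjTranspose_mul, hSH, ← Matrix.star_eq_conjTranspose]
    have hfin : (c₂ / c₁ * β) • D - S * E (fun i => (c₁ * g i)⁻¹) * S
        = (S * U) * Matrix.diagonal (fun i => c₂ / c₁ * β - (c₁ * g i)⁻¹) * (S * U)ᴴ := by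
      rw [hUH]
      have rhs : S * U * Matrix.diagonal (fun i => c₂ / c₁ * β - (c₁ * g i)⁻¹) * (star U * S)
          = S * E (fun i => c₂ / c₁ * β - (c₁ * g i)⁻¹) * S := by
        show _ = S * (U * Matrix.diagonal _ * star U) * S
        simp only [Matrix.mul_assoc]
      rw [rhs]
      have hsplit : E (fun i => c₂ / c₁ * β - (c₁ * g i)⁻¹)
          = (c₂ / c₁ * β) • (1 : Matrix n n ℝ) - E (fun i => (c₁ * g i)⁻¹) := by
        rw [← hEsmul, hEsub]
        congr 1
      rw [hsplit, Matrix.mul_sub, Matrix.sub_mul, Matrix.mul_smul, Matrix.smul_mul,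
        Matrix.mul_one, hSS]
    rw [hfin]
    exact (Matrix.posSemidef_diagonal_iff.mpr fun i => (hscal i).2).mul_mul_conjTranspose_same
      (S * U)
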